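/- arXiv:1512.04741 — 4 statements merged into one kernel-verified Lean document; each statement's English description precedes it below -/
import Mathlib

section
/- Let S0 > 0, K > 0, μ ∈ ℝ, t > 0, V > 0 and let ℓ be the lognormal density ℓ(x) = (1/(√(2π)·x·V))·exp(−(ln(x/S0) − μ·t + V²/2)²/(2V²)). Then ∫₀^∞ max(x − K, 0)·ℓ(x) dx = S0·e^{μt}·Φ(d₁) − K·Φ(d₂), where Φ(y) = ∫_{−∞}^{y} (1/√(2π))·e^{−u²/2} du is the standard normal cumulative distribution function, d₁ = (ln(S0/K) + μt + V²/2)/V and d₂ = d₁ − V. -/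
/-!
Under `x = exp z` the lognormal density becomes the Gaussian density with mean
`m = log S0 + μ t - V² / 2` and variance `V²`, and the payoff becomes `exp z - K` on `z > log K`.
Completing the square, `exp z` times the Gaussian density of mean `m` is `exp (m + V² / 2) = S0 e^{μt}`
times the Gaussian density of mean `m + V²`, so both terms are Gaussian tail probabilities, which an
affine change of variables turns into values of `Φ`.
-/

open Real MeasureTheory

/-- The standard normal cumulative distribution function. -/
noncomputable def stdNormalCDF (y : ℝ) : ℝ :=
  ∫ u in Set.Iic y, (1 / Real.sqrt (2 * Real.pi)) * Real.exp (-u ^ 2 / 2)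

open ProbabilityTheory Set
open scoped NNReal

noncomputable def lognormalPDF (S0 μ t V x : ℝ) : ℝ :=
  1 / (√(2 * π) * x * V) * exp (-(log (x / S0) - μ * t + V ^ 2 / 2) ^ 2 / (2 * V ^ 2))

lemma stdNormalCDF_eq_integral_gaussianPDFReal (y : ℝ) :
    stdNormalCDF y = ∫ u in Iic y, gaussianPDFReal 0 1 u := by
  simp [stdNormalCDF, gaussianPDFReal]

lemma exp_mul_gaussianPDFReal (m : ℝ) (v : ℝ≥0) (z : ℝ) :
    exp z * gaussianPDFReal m v z = exp (m + v / 2) * gaussianPDFReal (m + v) v z := by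
  rcases eq_or_ne v 0 with rfl | hv
  · simp
  have hv' : (v : ℝ) ≠ 0 := by exact_mod_cast hv
  simp only [gaussianPDFReal]
  rw [mul_left_comm, ← exp_add, mul_left_comm, ← exp_add]
  congr 2
  field_simp
  ring

lemma exp_mul_lognormalPDF_exp {S0 V : ℝ} (hS0 : S0 ≠ 0) (hV : 0 ≤ V) (μ t z : ℝ) :
    exp z * lognormalPDF S0 μ t V (exp z) =
      gaussianPDFReal (log S0 + μ * t - V ^ 2 / 2) (V ^ 2).toNNReal z := by
  simp only [lognormalPDF, gaussianPDFReal, Real.coe_toNNReal _ (sq_nonneg V)]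
  rw [log_div (exp_ne_zero z) hS0, log_exp, sqrt_mul' _ (sq_nonneg V), sqrt_sq hV]
  field_simp
  ring_nf

lemma setIntegral_Ioi_zero_max_sub_mul {K : ℝ} (hK : 0 ≤ K) (f : ℝ → ℝ) :
    ∫ x in Ioi 0, max (x - K) 0 * f x = ∫ x in Ioi K, (x - K) * f x := by
  rw [setIntegral_eq_of_subset_of_forall_sdiff_eq_zero measurableSet_Ioi
    (Ioi_subset_Ioi hK) fun x hx => ?_]
  · refine setIntegral_congr_fun measurableSet_Ioi fun x hx => ?_
    rw [max_eq_left (sub_nonneg.2 (le_of_lt hx))]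
  · rw [max_eq_right (sub_nonpos.2 (not_lt.1 hx.2)), zero_mul]

lemma integral_Ioi_gaussianPDFReal (b : ℝ) {v : ℝ≥0} (hv : v ≠ 0) (L : ℝ) :
    ∫ z in Ioi L, gaussianPDFReal b v z = stdNormalCDF ((b - L) / √v) := by
  set σ := √(v : ℝ)
  have hσ : 0 < σ := sqrt_pos.2 (by positivity)
  have hderiv (u : ℝ) : HasDerivWithinAt (fun u => b - σ * u) (-σ) (Iic ((b - L) / σ)) u := by
    simpa using ((hasDerivAt_id u).const_mul σ).const_sub b |>.hasDerivWithinAt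
  have himage : (fun u => b - σ * u) '' Iic ((b - L) / σ) = Ici L := by
    ext z
    refine ⟨?_, fun hz => ⟨(b - z) / σ, ?_, by field_simp; ring⟩⟩
    · rintro ⟨u, hu, rfl⟩
      rw [mem_Iic, le_div_iff₀ hσ] at hu
      exact mem_Ici.2 (by linarith)
    · exact div_le_div_of_nonneg_right (by linarith [mem_Ici.1 hz]) hσ.le
  rw [← integral_Ici_eq_integral_Ioi, ← himage,
    integral_image_eq_integral_abs_deriv_smul measurableSet_Iic (fun u _ => hderiv u)
      (fun u _ v _ h => mul_left_cancel₀ hσ.ne' (sub_right_injective h)),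
    stdNormalCDF_eq_integral_gaussianPDFReal]
  refine setIntegral_congr_fun measurableSet_Iic fun u _ => ?_
  have hvσ : (v : ℝ) = σ ^ 2 := (sq_sqrt v.2).symm
  simp only [gaussianPDFReal, NNReal.coe_one, hvσ, sub_zero, mul_one]
  have hexponent : -(b - σ * u - b) ^ 2 / (2 * σ ^ 2) = -u ^ 2 / 2 := by
    field_simp
    ring
  rw [abs_neg, abs_of_pos hσ, smul_eq_mul, sqrt_mul' _ (sq_nonneg σ), sqrt_sq hσ.le, hexponent]
  field_simp

lemma integral_Ioi_exp_sub_mul_gaussianPDFReal (m : ℝ) {v : ℝ≥0} (hv : v ≠ 0) (K L : ℝ) :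
    ∫ z in Ioi L, (exp z - K) * gaussianPDFReal m v z =
      exp (m + v / 2) * stdNormalCDF ((m + v - L) / √v) - K * stdNormalCDF ((m - L) / √v) := by
  have hint (b : ℝ) (c : ℝ) : IntegrableOn (fun z => c * gaussianPDFReal b v z) (Ioi L) :=
    ((integrable_gaussianPDFReal b v).const_mul c).integrableOn
  simp_rw [sub_mul, exp_mul_gaussianPDFReal]
  rw [integral_sub (hint _ _) (hint _ _), integral_const_mul, integral_const_mul,
    integral_Ioi_gaussianPDFReal _ hv, integral_Ioi_gaussianPDFReal _ hv]

theorem lognormal_call_price_black_scholes_general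
    (S0 K μ t V : ℝ) (hS0 : 0 < S0) (hK : 0 < K) (hV : 0 < V) :
    ∫ x in Set.Ioi (0 : ℝ),
      max (x - K) 0 * ((1 / (Real.sqrt (2 * Real.pi) * x * V)) *
        Real.exp (-(Real.log (x / S0) - μ * t + V ^ 2 / 2) ^ 2 / (2 * V ^ 2))) =
      S0 * Real.exp (μ * t) * stdNormalCDF ((Real.log (S0 / K) + μ * t + V ^ 2 / 2) / V)
        - K * stdNormalCDF ((Real.log (S0 / K) + μ * t + V ^ 2 / 2) / V - V) := by
  have hvar : ((V ^ 2).toNNReal : ℝ) = V ^ 2 := Real.coe_toNNReal _ (sq_nonneg V)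
  have hv : (V ^ 2).toNNReal ≠ 0 := (Real.toNNReal_pos.2 (by positivity)).ne'
  calc _ = ∫ x in Ioi K, (x - K) * lognormalPDF S0 μ t V x :=
        setIntegral_Ioi_zero_max_sub_mul hK.le _
    _ = ∫ z in Ioi (log K), exp z • ((exp z - K) * lognormalPDF S0 μ t V (exp z)) := by
        rw [integral_comp_exp_Ioi (fun x => (x - K) * lognormalPDF S0 μ t V x), exp_log hK]
    _ = ∫ z in Ioi (log K),
          (exp z - K) * gaussianPDFReal (log S0 + μ * t - V ^ 2 / 2) (V ^ 2).toNNReal z := by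
        simp_rw [smul_eq_mul, mul_left_comm (exp _), exp_mul_lognormalPDF_exp hS0.ne' hV.le]
    _ = exp (log S0 + μ * t - V ^ 2 / 2 + V ^ 2 / 2) *
            stdNormalCDF ((log S0 + μ * t - V ^ 2 / 2 + V ^ 2 - log K) / V)
          - K * stdNormalCDF ((log S0 + μ * t - V ^ 2 / 2 - log K) / V) := by
        rw [integral_Ioi_exp_sub_mul_gaussianPDFReal _ hv, hvar, sqrt_sq hV.le]
    _ = _ := by
        rw [log_div hS0.ne' hK.ne', sub_add_cancel, exp_add, exp_log hS0]
        congr 3 <;> field_simp <;> ring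

/-- The undiscounted price of a European call under the lognormal density is given by
the (undiscounted) Black–Scholes formula. -/
theorem lognormal_call_price_black_scholes
    (S0 K μ t V : ℝ) (hS0 : 0 < S0) (hK : 0 < K) (ht : 0 < t) (hV : 0 < V) :
    ∫ x in Set.Ioi (0 : ℝ),
      max (x - K) 0 * ((1 / (Real.sqrt (2 * Real.pi) * x * V)) *
        Real.exp (-(Real.log (x / S0) - μ * t + V ^ 2 / 2) ^ 2 / (2 * V ^ 2))) =
      S0 * Real.exp (μ * t) * stdNormalCDF ((Real.log (S0 / K) + μ * t + V ^ 2 / 2) / V)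
        - K * stdNormalCDF ((Real.log (S0 / K) + μ * t + V ^ 2 / 2) / V - V) :=
  lognormal_call_price_black_scholes_general S0 K μ t V hS0 hK hV
end

section
/- Let N ≥ 1, ρ ∈ ℝ, and for k, k' ∈ {1,…,N} let w_{kk'} ≥ 0 be weights not all zero and σ_1^k > 0, σ_2^{k'} > 0. Define the local correlation ρ_L = (ρ·Σ_{k,k'} w_{kk'} σ_1^k σ_2^{k'}) / √((Σ_{k,k'} w_{kk'} (σ_1^k)²)·(Σ_{k,k'} w_{kk'} (σ_2^{k'})²)). Then |ρ_L| ≤ |ρ|. In particular, with w_{kk'} = λ_1^k λ_2^{k'} ℓ̃^{(kk')}(x₁,x₂) for nonnegative mixture weights λ and strictly positive shifted bivariate lognormal densities ℓ̃^{(kk')}, the absolute value of the instantaneous local correlation of the shifted MVMD model is bounded by the absolute value of the instantaneous correlation parameter ρ of the shifted SCMD model. -/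
open Real

/-! The local correlation is `ρ` times the correlation coefficient of `σ₁ k` and `σ₂ k'` for the
nonnegative weights `w k k'` on pairs `(k, k')`; by the weighted Cauchy–Schwarz inequality this
coefficient has absolute value at most one (when its denominator vanishes it is `0` in Lean). -/

theorem Finset.sum_weighted_mul_sq_le_sq_mul_sq {ι R : Type*} [CommRing R] [LinearOrder R]
    [IsStrictOrderedRing R] (s : Finset ι) {w : ι → R} (hw : ∀ i ∈ s, 0 ≤ w i) (f g : ι → R) :
    (∑ i ∈ s, w i * f i * g i) ^ 2 ≤ (∑ i ∈ s, w i * f i ^ 2) * ∑ i ∈ s, w i * g i ^ 2 :=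
  Finset.sum_sq_le_sum_mul_sum_of_sq_le_mul s
    (fun i hi => mul_nonneg (hw i hi) (sq_nonneg _))
    (fun i hi => mul_nonneg (hw i hi) (sq_nonneg _))
    (fun i _ => le_of_eq (by ring))

theorem Real.abs_div_sqrt_le_one_of_sq_le {x y : ℝ} (h : x ^ 2 ≤ y) : |x / √y| ≤ 1 := by
  rw [abs_div, abs_of_nonneg (sqrt_nonneg y)]
  exact div_le_one_of_le₀ (abs_le_sqrt h) (sqrt_nonneg y)

theorem mvmd_local_correlation_bound_general
    (N : ℕ) (ρ : ℝ)
    (w : Fin N → Fin N → ℝ) (hw : ∀ k k', 0 ≤ w k k')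
    (σ1 σ2 : Fin N → ℝ) :
    |ρ * (∑ k, ∑ k', w k k' * σ1 k * σ2 k') /
        Real.sqrt ((∑ k, ∑ k', w k k' * (σ1 k) ^ 2) * (∑ k, ∑ k', w k k' * (σ2 k') ^ 2))|
      ≤ |ρ| := by
  have cauchy_schwarz := Finset.univ.sum_weighted_mul_sq_le_sq_mul_sq
    (w := fun p : Fin N × Fin N => w p.1 p.2) (fun p _ => hw p.1 p.2)
    (fun p => σ1 p.1) (fun p => σ2 p.2)
  simp only [Fintype.sum_prod_type] at cauchy_schwarz
  rw [mul_div_assoc, abs_mul]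
  exact mul_le_of_le_one_right (abs_nonneg ρ) (abs_div_sqrt_le_one_of_sq_le cauchy_schwarz)

/-- The absolute value of the instantaneous local correlation of the (shifted) MVMD model
is bounded by the absolute value of the instantaneous correlation parameter `ρ`. -/
theorem mvmd_local_correlation_bound
    (N : ℕ) (hN : 1 ≤ N) (ρ : ℝ)
    (w : Fin N → Fin N → ℝ) (hw : ∀ k k', 0 ≤ w k k') (hwne : ∃ k k', w k k' ≠ 0)
    (σ1 σ2 : Fin N → ℝ) (hσ1 : ∀ k, 0 < σ1 k) (hσ2 : ∀ k', 0 < σ2 k') :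
    |ρ * (∑ k, ∑ k', w k k' * σ1 k * σ2 k') /
        Real.sqrt ((∑ k, ∑ k', w k k' * (σ1 k) ^ 2) * (∑ k, ∑ k', w k k' * (σ2 k') ^ 2))|
      ≤ |ρ| :=
  mvmd_local_correlation_bound_general N ρ w hw σ1 σ2
end

section
/- Let μ ∈ ℝ, S0 > 0, N ≥ 1, let λ_1,…,λ_N ≥ 0 with Σ_k λ_k = 1, and let σ_1,…,σ_N : (0,∞) → ℝ be continuous with σ_k(s) ≥ σ̃ > 0 for all s and k. Define V_k(t) = (∫₀^t σ_k(s)² ds)^{1/2}, the lognormal densities ℓ^k_t(x) = (1/(√(2π)·x·V_k(t)))·exp(−(ln(x/S0) − μt + V_k(t)²/2)²/(2V_k(t)²)), the mixture p_t(x) = Σ_k λ_k ℓ^k_t(x), and the local volatility s(t,x) = ((Σ_k λ_k σ_k(t)² ℓ^k_t(x))/(Σ_k λ_k ℓ^k_t(x)))^{1/2} (assume at least one λ_k > 0). Then for all t > 0 and x > 0, ∂p_t(x)/∂t = −∂/∂x (μ·x·p_t(x)) + (1/2)·∂²/∂x² (s(t,x)²·x²·p_t(x)); i.e., the mixture of lognormal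 densities solves the Fokker–Planck equation associated with the LMD local volatility diffusion dS_t = μ S_t dt + s(t,S_t) S_t dW_t. -/
/-!
A lognormal density `ℓ(m, a, x)` with log-drift `m` and total variance `a` satisfies
`∂ₘ ℓ = -∂ₓ (x ℓ)` and `∂ₐ ℓ = ½ ∂ₓ² (x² ℓ)`. Along `m = μ t`, `a = V_k(t)²`, whose time
derivative is `σ_k(t)²`, the `k`-th component therefore solves the Fokker–Planck equation of the
geometric Brownian motion with volatility `σ_k(t)`. These equations are linear in the density,
and the local volatility is chosen so that `s² p = ∑ λ_k σ_k² ℓ_k`, so summing them with the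
weights `λ_k` gives the Fokker–Planck equation of the mixture.
-/

open Real intervalIntegral Filter Topology

noncomputable section

def centeredLogReturn (S0 m a x : ℝ) : ℝ := log (x / S0) - m + a / 2

/-- The density of `S0 * exp (m - a / 2 + √a * Z)` with `Z` standard normal, so that
`ℓ^k_t = lognormalDensity S0 (μ * t) (V_k(t) ^ 2)`. -/
def lognormalDensity (S0 m a x : ℝ) : ℝ :=
  1 / (√(2 * π) * x * √a) * exp (-centeredLogReturn S0 m a x ^ 2 / (2 * a))

/-- `f` is a classical solution at `(t, x)` of `∂ₜ f = -∂ₓ (μ x f) + (v / 2) ∂ₓ² (x² f)`, the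
Fokker–Planck equation of `dS = μ S dt + √v S dW`. -/
def IsFokkerPlanckSolutionAt (f : ℝ → ℝ → ℝ) (μ v t x : ℝ) : Prop :=
  ∃ (T d D2 : ℝ) (D1 : ℝ → ℝ), HasDerivAt (fun τ => f τ x) T t ∧
    HasDerivAt (fun y => μ * y * f t y) d x ∧
    (∀ᶠ y in 𝓝 x, HasDerivAt (fun y' => y' ^ 2 * f t y') (D1 y) y) ∧
    HasDerivAt D1 D2 x ∧ T = -d + v / 2 * D2

end

section LognormalDensity

variable {S0 m a x : ℝ}

lemma lognormalDensity_nonneg (hx : 0 ≤ x) : 0 ≤ lognormalDensity S0 m a x := by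
  unfold lognormalDensity; positivity

lemma hasDerivAt_centeredLogReturn (hS0 : S0 ≠ 0) (hx : x ≠ 0) :
    HasDerivAt (centeredLogReturn S0 m a) x⁻¹ x := by
  have h := (((hasDerivAt_id' x).div_const S0).log (div_ne_zero hx hS0)).sub_const m
    |>.add_const (a / 2)
  refine h.congr_deriv ?_
  field_simp

lemma mul_lognormalDensity (hx : x ≠ 0) :
    x * lognormalDensity S0 m a x =
      (√(2 * π) * √a)⁻¹ * exp (-centeredLogReturn S0 m a x ^ 2 / (2 * a)) := by
  rw [lognormalDensity, show √(2 * π) * x * √a = x * (√(2 * π) * √a) by ring, one_div,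
    mul_inv, ← mul_assoc, ← mul_assoc, mul_inv_cancel₀ hx, one_mul]

lemma hasDerivAt_mul_lognormalDensity (hS0 : S0 ≠ 0) (hx : x ≠ 0) (ha : a ≠ 0) :
    HasDerivAt (fun y => y * lognormalDensity S0 m a y)
      (-(centeredLogReturn S0 m a x / a) * lognormalDensity S0 m a x) x := by
  have h := (((hasDerivAt_centeredLogReturn (m := m) (a := a) hS0 hx).fun_pow 2).fun_neg.div_const
    (2 * a)).exp.const_mul (√(2 * π) * √a)⁻¹
  have heq : (fun y => y * lognormalDensity S0 m a y) =ᶠ[𝓝 x]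
      fun y => (√(2 * π) * √a)⁻¹ * exp (-centeredLogReturn S0 m a y ^ 2 / (2 * a)) :=
    (eventually_ne_nhds hx).mono fun y hy => mul_lognormalDensity hy
  refine (h.congr_of_eventuallyEq heq).congr_deriv ?_
  rw [← inv_mul_cancel_left₀ hx (lognormalDensity S0 m a x), mul_lognormalDensity hx]
  field_simp
  ring

lemma hasDerivAt_sq_mul_lognormalDensity (hS0 : S0 ≠ 0) (hx : x ≠ 0) (ha : a ≠ 0) :
    HasDerivAt (fun y => y ^ 2 * lognormalDensity S0 m a y)
      ((1 - centeredLogReturn S0 m a x / a) * (x * lognormalDensity S0 m a x)) x := by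
  have h := (hasDerivAt_id' x).fun_mul (hasDerivAt_mul_lognormalDensity (m := m) hS0 hx ha)
  rw [show (fun y => y ^ 2 * lognormalDensity S0 m a y) =
      fun y => y * (y * lognormalDensity S0 m a y) by funext y; ring]
  exact h.congr_deriv (by ring)

lemma hasDerivAt_deriv_sq_mul_lognormalDensity (hS0 : S0 ≠ 0) (hx : x ≠ 0) (ha : a ≠ 0) :
    HasDerivAt (deriv fun y => y ^ 2 * lognormalDensity S0 m a y)
      ((centeredLogReturn S0 m a x ^ 2 / a - centeredLogReturn S0 m a x - 1) / a *
        lognormalDensity S0 m a x) x := by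
  have h := (((hasDerivAt_centeredLogReturn (m := m) (a := a) hS0 hx).div_const a).const_sub
    1).fun_mul (hasDerivAt_mul_lognormalDensity (m := m) hS0 hx ha)
  refine (h.congr_of_eventuallyEq ?_).congr_deriv ?_
  · filter_upwards [eventually_ne_nhds hx] with y hy
    exact (hasDerivAt_sq_mul_lognormalDensity hS0 hy ha).deriv
  · field_simp
    ring

lemma hasDerivAt_centeredLogReturn_comp {m a : ℝ → ℝ} {m' a' t : ℝ} (hm : HasDerivAt m m' t)
    (ha : HasDerivAt a a' t) :
    HasDerivAt (fun τ => centeredLogReturn S0 (m τ) (a τ) x) (-m' + a' / 2) t :=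
  ((hm.const_sub (log (x / S0))).add (ha.div_const 2)).congr_deriv (by ring)

lemma hasDerivAt_lognormalDensity_comp {m a : ℝ → ℝ} {m' a' t : ℝ} (hm : HasDerivAt m m' t)
    (ha : HasDerivAt a a' t) (ha0 : 0 < a t) (hx : x ≠ 0) :
    HasDerivAt (fun τ => lognormalDensity S0 (m τ) (a τ) x)
      ((m' * (centeredLogReturn S0 (m t) (a t) x / a t) +
        a' * (centeredLogReturn S0 (m t) (a t) x ^ 2 / a t - centeredLogReturn S0 (m t) (a t) x - 1)
          / (2 * a t)) * lognormalDensity S0 (m t) (a t) x) t := by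
  have hsqrt : HasDerivAt (fun τ => √(2 * π) * x * √(a τ))
      (√(2 * π) * x * (a' / (2 * √(a t)))) t :=
    (ha.sqrt ha0.ne').const_mul _
  have hexp := (((hasDerivAt_centeredLogReturn_comp (S0 := S0) (x := x) hm ha).fun_pow
    2).fun_neg.fun_div (ha.const_mul 2) (by positivity)).exp
  have h := ((hasDerivAt_const t (1 : ℝ)).fun_div hsqrt (by positivity)).fun_mul hexp
  refine h.congr_deriv ?_
  unfold lognormalDensity
  set w := centeredLogReturn S0 (m t) (a t) x
  obtain ⟨r, hr0, hr⟩ : ∃ r, 0 < r ∧ a t = r ^ 2 :=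
    ⟨√(a t), sqrt_pos.2 ha0, (sq_sqrt ha0.le).symm⟩
  rw [hr, sqrt_sq hr0.le]
  field_simp
  ring

end LognormalDensity

section FokkerPlanck

variable {μ t x : ℝ}

lemma isFokkerPlanckSolutionAt_of_eventually_eq_zero {f : ℝ → ℝ → ℝ} {v : ℝ}
    (hf : ∀ᶠ τ in 𝓝 t, f τ = 0) : IsFokkerPlanckSolutionAt f μ v t x := by
  have hft : f t = 0 := hf.self_of_nhds
  refine ⟨0, 0, 0, fun _ => 0, ?_, ?_, ?_, hasDerivAt_const x 0, by ring⟩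
  · exact (hasDerivAt_const t 0).congr_of_eventuallyEq (hf.mono fun τ hτ => by simp [hτ])
  · simpa [hft] using hasDerivAt_const x (0 : ℝ)
  · exact Eventually.of_forall fun y => by simpa [hft] using hasDerivAt_const y (0 : ℝ)

lemma isFokkerPlanckSolutionAt_lognormalDensity {S0 v : ℝ} {a : ℝ → ℝ} (hS0 : S0 ≠ 0)
    (hx : x ≠ 0) (ha : HasDerivAt a v t) (ha0 : 0 < a t) :
    IsFokkerPlanckSolutionAt (fun τ y => lognormalDensity S0 (μ * τ) (a τ) y) μ v t x := by
  have hdrift := (hasDerivAt_mul_lognormalDensity (m := μ * t) hS0 hx ha0.ne').const_mul μ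
  simp only [← mul_assoc] at hdrift
  refine ⟨_, _, _, _, hasDerivAt_lognormalDensity_comp ((hasDerivAt_id' t).const_mul μ) ha ha0 hx,
    hdrift, (eventually_ne_nhds hx).mono fun y hy =>
      (hasDerivAt_sq_mul_lognormalDensity hS0 hy ha0.ne').differentiableAt.hasDerivAt,
    hasDerivAt_deriv_sq_mul_lognormalDensity hS0 hx ha0.ne', ?_⟩
  field_simp

lemma eventually_integral_eq_zero_of_not_intervalIntegrable {E : Type*} [NormedAddCommGroup E]
    [NormedSpace ℝ E] {f : ℝ → E} {a : ℝ} (hf : ContinuousOn f (Set.Ioi a)) (ht : a < t)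
    (hint : ¬IntervalIntegrable f MeasureTheory.volume a t) :
    ∀ᶠ τ in 𝓝 t, ∫ u in a..τ, f u = 0 := by
  filter_upwards [Ioi_mem_nhds ht] with τ hτ
  refine integral_undef fun hτint => hint (hτint.trans (hf.mono ?_).intervalIntegrable)
  exact fun u hu => lt_of_lt_of_le (lt_min hτ ht) hu.1

lemma isFokkerPlanckSolutionAt_lognormalDensity_integral {S0 : ℝ} {σ : ℝ → ℝ}
    (hσ : ContinuousOn σ (Set.Ioi 0)) (hσ0 : ∀ s, 0 < s → σ s ≠ 0) (hS0 : S0 ≠ 0) (hx : x ≠ 0)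
    (ht : 0 < t) :
    IsFokkerPlanckSolutionAt
      (fun τ y => lognormalDensity S0 (μ * τ) (√(∫ u in 0..τ, σ u ^ 2) ^ 2) y) μ (σ t ^ 2) t x := by
  have hσ2 : ContinuousOn (fun u => σ u ^ 2) (Set.Ioi 0) := hσ.pow 2
  by_cases hint : IntervalIntegrable (fun u => σ u ^ 2) MeasureTheory.volume 0 t
  · have hA : HasDerivAt (fun τ => ∫ u in 0..τ, σ u ^ 2) (σ t ^ 2) t :=
      integral_hasDerivAt_right hint (hσ2.stronglyMeasurableAtFilter isOpen_Ioi t ht)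
        (hσ2.continuousAt (Ioi_mem_nhds ht))
    have hApos : 0 < ∫ u in 0..t, σ u ^ 2 :=
      intervalIntegral_pos_of_pos_on hint (fun s hs => sq_pos_of_ne_zero (hσ0 s hs.1)) ht
    have hsq : (fun τ => √(∫ u in 0..τ, σ u ^ 2) ^ 2) =ᶠ[𝓝 t] fun τ => ∫ u in 0..τ, σ u ^ 2 := by
      filter_upwards [Ioi_mem_nhds ht] with τ hτ
      exact sq_sqrt (integral_nonneg hτ.le fun u _ => sq_nonneg (σ u))
    exact isFokkerPlanckSolutionAt_lognormalDensity hS0 hx (hA.congr_of_eventuallyEq hsq)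
      (by rwa [sq_sqrt hApos.le])
  · -- `σ` may fail to be square integrable at `0`; the integral is then the junk value `0` near
    -- `t`, and so is the density, because `1 / 0 = 0`.
    refine isFokkerPlanckSolutionAt_of_eventually_eq_zero ?_
    filter_upwards [eventually_integral_eq_zero_of_not_intervalIntegrable hσ2 ht hint] with τ hτ
    funext y
    simp [hτ, lognormalDensity]

lemma IsFokkerPlanckSolutionAt.deriv_sum {ι : Type*} [Fintype ι] {f : ι → ℝ → ℝ → ℝ}
    {c v : ι → ℝ} (hf : ∀ k, IsFokkerPlanckSolutionAt (f k) μ (v k) t x) :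
    deriv (fun τ => ∑ k, c k * f k τ x) t =
      -deriv (fun y => μ * y * ∑ k, c k * f k t y) x +
        1 / 2 * deriv (deriv fun y => ∑ k, c k * v k * (y ^ 2 * f k t y)) x := by
  choose T d D2 D1 hT hd hD1 hD2 hFP using hf
  have hdrift : HasDerivAt (fun y => μ * y * ∑ k, c k * f k t y) (∑ k, c k * d k) x := by
    have h := HasDerivAt.fun_sum fun k (_ : k ∈ Finset.univ) => (hd k).const_mul (c k)
    refine h.congr_of_eventuallyEq (Eventually.of_forall fun y => ?_)
    simp only [Finset.mul_sum]
    exact Finset.sum_congr rfl fun k _ => by ring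
  have hflux : deriv (fun y => ∑ k, c k * v k * (y ^ 2 * f k t y)) =ᶠ[𝓝 x]
      fun y => ∑ k, c k * v k * D1 k y := by
    filter_upwards [eventually_all.2 hD1] with y hy
    exact (HasDerivAt.fun_sum fun k _ => (hy k).const_mul (c k * v k)).deriv
  rw [(HasDerivAt.fun_sum fun k _ => (hT k).const_mul (c k)).deriv, hdrift.deriv,
    hflux.deriv_eq, (HasDerivAt.fun_sum fun k _ => (hD2 k).const_mul (c k * v k)).deriv,
    Finset.mul_sum, ← Finset.sum_neg_distrib, ← Finset.sum_add_distrib]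
  exact Finset.sum_congr rfl fun k _ => by rw [hFP]; ring

end FokkerPlanck

lemma sq_sqrt_div_mul_sum {ι : Type*} [Fintype ι] {c v q : ι → ℝ} (hc : ∀ k, 0 ≤ c k)
    (hv : ∀ k, 0 ≤ v k) (hq : ∀ k, 0 ≤ q k) :
    √((∑ k, c k * v k * q k) / ∑ k, c k * q k) ^ 2 * ∑ k, c k * q k = ∑ k, c k * v k * q k := by
  have hcq : ∀ k, 0 ≤ c k * q k := fun k => mul_nonneg (hc k) (hq k)
  have hcvq : ∀ k, 0 ≤ c k * v k * q k := fun k => mul_nonneg (mul_nonneg (hc k) (hv k)) (hq k)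
  rw [sq_sqrt (div_nonneg (Finset.sum_nonneg fun k _ => hcvq k)
    (Finset.sum_nonneg fun k _ => hcq k))]
  by_cases h : ∑ k, c k * q k = 0
  · have hzero := (Finset.sum_eq_zero_iff_of_nonneg fun k _ => hcq k).1 h
    rw [h, mul_zero, eq_comm]
    exact Finset.sum_eq_zero fun k hk => by
      rw [mul_right_comm, hzero k hk, zero_mul]
  · exact div_mul_cancel₀ _ h

theorem lognormal_mixture_fokker_planck_general
    (μ S0 σlow : ℝ) (hS0 : 0 < S0) (hσlow : 0 < σlow)
    (N : ℕ) (lam : Fin N → ℝ)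
    (hlam : ∀ k, 0 ≤ lam k)
    (σ : Fin N → ℝ → ℝ) (hσcont : ∀ k, ContinuousOn (σ k) (Set.Ioi 0))
    (hσ : ∀ k s, 0 < s → σlow ≤ σ k s)
    (V : Fin N → ℝ → ℝ) (hV : ∀ k t, V k t = Real.sqrt (∫ s in (0 : ℝ)..t, (σ k s) ^ 2))
    (ℓ : Fin N → ℝ → ℝ → ℝ)
    (hℓ : ∀ k t x, ℓ k t x =
      (1 / (Real.sqrt (2 * Real.pi) * x * V k t)) *
        Real.exp (-(Real.log (x / S0) - μ * t + (V k t) ^ 2 / 2) ^ 2 / (2 * (V k t) ^ 2)))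
    (p : ℝ → ℝ → ℝ) (hp : ∀ t x, p t x = ∑ k, lam k * ℓ k t x)
    (s : ℝ → ℝ → ℝ)
    (hs : ∀ t x, s t x =
      Real.sqrt ((∑ k, lam k * (σ k t) ^ 2 * ℓ k t x) / (∑ k, lam k * ℓ k t x))) :
    ∀ t, 0 < t → ∀ x, 0 < x →
      deriv (fun τ => p τ x) t =
        -(deriv (fun y => μ * y * p t y) x)
          + (1 / 2) * deriv (deriv (fun y => (s t y) ^ 2 * y ^ 2 * p t y)) x := by
  intro t ht x hx
  have hℓ_eq : ∀ k, ℓ k = fun τ y =>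
      lognormalDensity S0 (μ * τ) (√(∫ u in 0..τ, σ k u ^ 2) ^ 2) y := fun k => by
    funext τ y
    rw [hℓ, hV, lognormalDensity, centeredLogReturn, sqrt_sq (sqrt_nonneg _)]
  have hsol : ∀ k, IsFokkerPlanckSolutionAt (ℓ k) μ (σ k t ^ 2) t x := fun k => by
    rw [hℓ_eq k]
    exact isFokkerPlanckSolutionAt_lognormalDensity_integral (hσcont k)
      (fun s hs => (hσlow.trans_le (hσ k s hs)).ne') hS0.ne' hx.ne' ht
  have hvol : (fun y => s t y ^ 2 * y ^ 2 * p t y) =ᶠ[𝓝 x]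
      fun y => ∑ k, lam k * σ k t ^ 2 * (y ^ 2 * ℓ k t y) := by
    filter_upwards [Ioi_mem_nhds hx] with y hy
    have hℓ_nonneg : ∀ k, 0 ≤ ℓ k t y := fun k => by
      rw [hℓ_eq k]
      exact lognormalDensity_nonneg hy.le
    rw [hs, hp, mul_right_comm, sq_sqrt_div_mul_sum hlam (fun k => sq_nonneg _) hℓ_nonneg,
      Finset.sum_mul]
    exact Finset.sum_congr rfl fun k _ => by ring
  rw [hvol.deriv.deriv_eq]
  simp only [hp]
  exact IsFokkerPlanckSolutionAt.deriv_sum hsol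

/-- The mixture of lognormal densities solves the Fokker–Planck equation associated with
the LMD local-volatility diffusion `dS_t = μ S_t dt + s(t,S_t) S_t dW_t`. -/
theorem lognormal_mixture_fokker_planck
    (μ S0 σlow : ℝ) (hS0 : 0 < S0) (hσlow : 0 < σlow)
    (N : ℕ) (hN : 1 ≤ N) (lam : Fin N → ℝ)
    (hlam : ∀ k, 0 ≤ lam k) (hsum : ∑ k, lam k = 1) (hpos : ∃ k, 0 < lam k)
    (σ : Fin N → ℝ → ℝ) (hσcont : ∀ k, ContinuousOn (σ k) (Set.Ioi 0))
    (hσ : ∀ k s, 0 < s → σlow ≤ σ k s)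
    (V : Fin N → ℝ → ℝ) (hV : ∀ k t, V k t = Real.sqrt (∫ s in (0 : ℝ)..t, (σ k s) ^ 2))
    (ℓ : Fin N → ℝ → ℝ → ℝ)
    (hℓ : ∀ k t x, ℓ k t x =
      (1 / (Real.sqrt (2 * Real.pi) * x * V k t)) *
        Real.exp (-(Real.log (x / S0) - μ * t + (V k t) ^ 2 / 2) ^ 2 / (2 * (V k t) ^ 2)))
    (p : ℝ → ℝ → ℝ) (hp : ∀ t x, p t x = ∑ k, lam k * ℓ k t x)
    (s : ℝ → ℝ → ℝ)
    (hs : ∀ t x, s t x =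
      Real.sqrt ((∑ k, lam k * (σ k t) ^ 2 * ℓ k t x) / (∑ k, lam k * ℓ k t x))) :
    ∀ t, 0 < t → ∀ x, 0 < x →
      deriv (fun τ => p τ x) t =
        -(deriv (fun y => μ * y * p t y) x)
          + (1 / 2) * deriv (deriv (fun y => (s t y) ^ 2 * y ^ 2 * p t y)) x :=
  lognormal_mixture_fokker_planck_general μ S0 σlow hS0 hσlow N lam hlam σ hσcont hσ V hV ℓ hℓ p hp
    s hs
end

section
/- For all real numbers a, b and every ρ ∈ [−1,1], the inequality (e^{ρab} − 1)² ≤ ρ²·(e^{a²} − 1)·(e^{b²} − 1) holds. Consequently, the terminal correlation of two jointly lognormal variables — which equals (e^{ρ s₁ s₂} − 1)/√((e^{s₁²} − 1)(e^{s₂²} − 1)) when the underlying Gaussians have standard deviations s₁, s₂ and correlation ρ — is always smaller in absolute value than the absolute value of the instantaneous correlation ρ. -/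
/-!
Expand both sides in the exponential series: `e^{ρxy} - 1 = ∑ₙ (ρxy)ⁿ⁺¹/(n+1)!`, and the square
of each term is at most the product of the terms `ρ²(x²)ⁿ⁺¹/(n+1)!` and `(y²)ⁿ⁺¹/(n+1)!` of the
series of `ρ²(e^{x²} - 1)` and `e^{y²} - 1`, because `ρ²ⁿ ≤ 1`. Cauchy–Schwarz for series then
gives the inequality, and the correlation bound is its square root.
-/

open Real Finset Filter Nat

theorem HasSum.sq_le_mul_of_sq_le_mul {ι : Type*} {r f g : ι → ℝ} {R F G : ℝ}
    (hr : HasSum r R) (hf : HasSum f F) (hg : HasSum g G)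
    (hf₀ : ∀ i, 0 ≤ f i) (hg₀ : ∀ i, 0 ≤ g i) (hrfg : ∀ i, r i ^ 2 ≤ f i * g i) :
    R ^ 2 ≤ F * G :=
  le_of_tendsto_of_tendsto' (hr.pow 2) (Tendsto.mul hf hg) fun s =>
    sum_sq_le_sum_mul_sum_of_sq_le_mul s (fun i _ => hf₀ i) (fun i _ => hg₀ i) fun i _ => hrfg i

theorem Real.hasSum_pow_succ_div_factorial (x : ℝ) :
    HasSum (fun n : ℕ => x ^ (n + 1) / (n + 1)!) (exp x - 1) := by
  have := (hasSum_nat_add_iff' 1).mpr (NormedSpace.expSeries_div_hasSum_exp (𝔸 := ℝ) x)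
  simpa [← Real.exp_eq_exp_ℝ] using this

theorem sq_exp_mul_mul_sub_one_le {ρ : ℝ} (hρ : |ρ| ≤ 1) (x y : ℝ) :
    (exp (ρ * x * y) - 1) ^ 2 ≤ ρ ^ 2 * (exp (x ^ 2) - 1) * (exp (y ^ 2) - 1) := by
  refine HasSum.sq_le_mul_of_sq_le_mul (hasSum_pow_succ_div_factorial (ρ * x * y))
    ((hasSum_pow_succ_div_factorial (x ^ 2)).mul_left (ρ ^ 2))
    (hasSum_pow_succ_div_factorial (y ^ 2)) (fun n => by positivity) (fun n => by positivity)
    fun n => ?_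
  have hρn : (ρ ^ 2) ^ n ≤ 1 := pow_le_one₀ (sq_nonneg ρ) ((sq_le_one_iff_abs_le_one ρ).mpr hρ)
  calc ((ρ * x * y) ^ (n + 1) / (n + 1)!) ^ 2
      = (ρ ^ 2) ^ n * (ρ ^ 2 * ((x ^ 2) ^ (n + 1) / (n + 1)!) * ((y ^ 2) ^ (n + 1) / (n + 1)!)) := by
        ring
    _ ≤ ρ ^ 2 * ((x ^ 2) ^ (n + 1) / (n + 1)!) * ((y ^ 2) ^ (n + 1) / (n + 1)!) :=
        mul_le_of_le_one_left (by positivity) hρn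

theorem abs_div_sqrt_le_of_sq_le_mul {A D ρ : ℝ} (h : A ^ 2 ≤ ρ ^ 2 * D) : |A / √D| ≤ |ρ| := by
  rw [abs_div, abs_of_nonneg (sqrt_nonneg D)]
  refine div_le_of_le_mul₀ (sqrt_nonneg D) (abs_nonneg ρ) ?_
  calc |A| ≤ √(ρ ^ 2 * D) := abs_le_sqrt h
    _ = |ρ| * √D := by rw [sqrt_mul (sq_nonneg ρ), sqrt_sq_eq_abs]

/-- Cauchy–Schwarz-type inequality `(e^{ρab} - 1)² ≤ ρ²(e^{a²} - 1)(e^{b²} - 1)`;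
consequently the terminal correlation of two jointly lognormal variables is bounded in
absolute value by the absolute value of the instantaneous correlation `ρ`. -/
theorem terminal_correlation_le_instantaneous
    (a b ρ : ℝ) (hρ : ρ ∈ Set.Icc (-1 : ℝ) 1) :
    (Real.exp (ρ * a * b) - 1) ^ 2 ≤ ρ ^ 2 * (Real.exp (a ^ 2) - 1) * (Real.exp (b ^ 2) - 1)
    ∧
    ∀ s₁ s₂ : ℝ, 0 < s₁ → 0 < s₂ →
      |(Real.exp (ρ * s₁ * s₂) - 1) /
          Real.sqrt ((Real.exp (s₁ ^ 2) - 1) * (Real.exp (s₂ ^ 2) - 1))| ≤ |ρ| := by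
  have hρ' : |ρ| ≤ 1 := abs_le.mpr hρ
  refine ⟨sq_exp_mul_mul_sub_one_le hρ' a b, fun s₁ s₂ _ _ => ?_⟩
  apply abs_div_sqrt_le_of_sq_le_mul
  rw [← mul_assoc]
  exact sq_exp_mul_mul_sub_one_le hρ' s₁ s₂
end
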